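/- arXiv:1601.04858 — 2 statements merged into one kernel-verified Lean document; each statement's English description precedes it below -/
import Mathlib

section
/- Let $f(x)=b_0+b_1 x+b_2 x^2+\cdots$ be a nonzero real power series convergent on $(-R,R)$, $R>0$. Then the number of zeroes of $f$ in $(0,R)$, counted with multiplicity, is at most the number of sign changes of the coefficient sequence $(b_0,b_1,b_2,\ldots)$. -/
open Finset Set

-- Number of sign changes of a real sequence, as an extended natural number.
noncomputable def signChanges (b : ℕ → ℝ) : ℕ∞ :=
  ⨆ k ∈ {k : ℕ | ∃ i : Fin (k+1) → ℕ, StrictMono i ∧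
      ∀ j : Fin k, b (i j.castSucc) * b (i j.succ) < 0}, (k : ℕ∞)

/-!
Induction on the number of zeros. If `f` vanishes somewhere in `(0, R)`, its coefficients change
sign; let `q` be the first index at which they do and `s = q - 1/2`. Rolle's theorem applied to
`x ^ (-s) * f x`, whose derivative is `x ^ (-s - 1) * (x f' x - s f x)`, shows that
`x f' - s f`, the sum of `∑ (n - s) bₙ xⁿ`, has at most one zero fewer in `(0, R)`. Multiplying by
`n - s` flips exactly the signs of the coefficients before `q`, so `((n - s) bₙ)` has at least one
sign change fewer than `b`.
-/

lemma exists_first_mul_neg {b : ℕ → ℝ} (h : ∃ p q, p < q ∧ b p * b q < 0) :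
    ∃ p q, p < q ∧ b p * b q < 0 ∧ ∀ n < q, b n * b q ≤ 0 := by
  classical
  have hex : ∃ q, ∃ p < q, b p * b q < 0 := let ⟨p, q, hpq, hb⟩ := h; ⟨q, p, hpq, hb⟩
  obtain ⟨p, hpq, hbpq⟩ := Nat.find_spec hex
  refine ⟨p, Nat.find hex, hpq, hbpq, fun n hn => ?_⟩
  by_contra! hpos
  have hpn : b p * b n < 0 := by
    nlinarith [mul_neg_of_neg_of_pos hbpq hpos, sq_nonneg (b (Nat.find hex))]
  rcases lt_trichotomy p n with h | rfl | h
  · exact Nat.find_min hex hn ⟨p, h, hpn⟩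
  · linarith [mul_self_nonneg (b p)]
  · exact Nat.find_min hex hpq ⟨n, h, by linarith [mul_comm (b p) (b n)]⟩

/-- `SignChain b k t`: there are indices `t = i₀ < i₁ < ⋯ < iₖ` with `b iⱼ * b iⱼ₊₁ < 0`. -/
def SignChain (b : ℕ → ℝ) : ℕ → ℕ → Prop
  | 0, _ => True
  | k + 1, t => ∃ t', t < t' ∧ b t * b t' < 0 ∧ SignChain b k t'

namespace SignChain

variable {b : ℕ → ℝ}

lemma cons {k x t : ℕ} (hxt : x ≤ t) (hb : b x * b t < 0) (h : SignChain b k t) :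
    SignChain b (k + 1) x := by
  refine ⟨t, hxt.lt_of_ne ?_, hb, h⟩
  rintro rfl
  exact (mul_self_nonneg (b x)).not_gt hb

lemma ne_zero {k t : ℕ} (h : SignChain b (k + 1) t) : b t ≠ 0 := by
  obtain ⟨t', -, hb, -⟩ := h
  rintro h0
  simp [h0] at hb

lemma of_pos_mul {w : ℕ → ℝ} {q : ℕ} (hw : ∀ n ≥ q, 0 < w n) :
    ∀ {k t : ℕ}, q ≤ t → SignChain (fun n => w n * b n) k t → SignChain b k t
  | 0, _, _, _ => trivial
  | k + 1, t, hqt, ⟨t', htt', hb, h⟩ => by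
    refine ⟨t', htt', ?_, of_pos_mul hw (hqt.trans htt'.le) h⟩
    have := mul_pos (hw t hqt) (hw t' (hqt.trans htt'.le))
    nlinarith

lemma exists_strictMono :
    ∀ {k t : ℕ}, SignChain b k t → ∃ i : Fin (k + 1) → ℕ, i 0 = t ∧ StrictMono i ∧
      ∀ j : Fin k, b (i j.castSucc) * b (i j.succ) < 0
  | 0, t, _ => ⟨fun _ => t, rfl, Fin.strictMono_iff_lt_succ.2 fun j => j.elim0, fun j => j.elim0⟩
  | k + 1, t, ⟨t', htt', hb, h⟩ => by
    obtain ⟨i, hi0, hmono, halt⟩ := exists_strictMono h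
    refine ⟨Fin.cons t i, rfl, ?_, fun j => ?_⟩
    · refine Fin.strictMono_iff_lt_succ.2 fun j => ?_
      induction j using Fin.cases with
      | zero => simpa [hi0] using htt'
      | succ j => simpa [← Fin.succ_castSucc] using hmono (Fin.castSucc_lt_succ (i := j))
    · induction j using Fin.cases with
      | zero => simpa [hi0] using hb
      | succ j => simpa [← Fin.succ_castSucc] using halt j

lemma le_signChanges {k t : ℕ} (h : SignChain b k t) : (k : ℕ∞) ≤ signChanges b := by
  obtain ⟨i, -, hmono, halt⟩ := h.exists_strictMono
  exact le_iSup₂ (f := fun (k : ℕ) (_ : k ∈ {k : ℕ | ∃ i : Fin (k+1) → ℕ, StrictMono i ∧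
      ∀ j : Fin k, b (i j.castSucc) * b (i j.succ) < 0}) => (k : ℕ∞)) k ⟨i, hmono, halt⟩

/-- The weights `n - (q - 1/2)` flip exactly the signs before `q`, where the sign of `b` is
still the opposite of that of `b q`. -/
lemma exists_succ_of_sub_half_mul {p q k t : ℕ} (hpq : p < q) (hbpq : b p * b q < 0)
    (hfirst : ∀ n < q, b n * b q ≤ 0)
    (h : SignChain (fun n => ((n : ℝ) - (q - 1 / 2)) * b n) k t) :
    ∃ t', SignChain b (k + 1) t' := by
  obtain _ | k := k
  · exact ⟨p, q, hpq, hbpq, trivial⟩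
  have hw : ∀ n ≥ q, 0 < (n : ℝ) - (q - 1 / 2) := fun n hn => by
    have : (q : ℝ) ≤ n := by exact_mod_cast hn
    linarith
  have hbq : b q ≠ 0 := by rintro h0; simp [h0] at hbpq
  by_cases hqt : q ≤ t
  · have hb : SignChain b (k + 1) t := h.of_pos_mul hw hqt
    have hbt := hb.ne_zero
    rcases lt_or_ge (b q * b t) 0 with hqt' | hqt'
    · exact ⟨q, hb.cons hqt hqt'⟩
    · have : 0 < b q * b t := hqt'.lt_of_ne (mul_ne_zero hbq hbt).symm
      refine ⟨p, hb.cons (hpq.le.trans hqt) ?_⟩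
      nlinarith [mul_neg_of_neg_of_pos hbpq this, mul_self_pos.2 hbq]
  · replace hqt := not_le.1 hqt
    obtain ⟨t₁, htt₁, hct, hc₁⟩ := h
    have hwt : (t : ℝ) - (q - 1 / 2) < 0 := by
      have : (t : ℝ) + 1 ≤ q := by exact_mod_cast hqt
      linarith
    have hbt : b t * b q < 0 := by
      have hbt0 : b t ≠ 0 := by rintro h0; simp [h0] at hct
      exact (hfirst t hqt).lt_of_ne (mul_ne_zero hbt0 hbq)
    have hqt₁ : q ≤ t₁ := by
      by_contra! ht₁
      have hwt₁ : (t₁ : ℝ) - (q - 1 / 2) < 0 := by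
        have : (t₁ : ℝ) + 1 ≤ q := by exact_mod_cast ht₁
        linarith
      have hbtt₁ : b t * b t₁ < 0 := by nlinarith [mul_pos_of_neg_of_neg hwt hwt₁]
      nlinarith [mul_pos_of_neg_of_neg hbt hbtt₁,
        mul_nonpos_of_nonneg_of_nonpos (mul_self_nonneg (b t)) (hfirst t₁ ht₁)]
    have hbtt₁ : 0 < b t * b t₁ := by nlinarith [mul_neg_of_neg_of_pos hwt (hw t₁ hqt₁)]
    have hbqt₁ : b q * b t₁ < 0 := by
      by_contra! h
      nlinarith [mul_neg_of_neg_of_pos hbt hbtt₁, mul_nonneg (mul_self_nonneg (b t)) h]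
    exact ⟨t, ((hc₁.of_pos_mul hw hqt₁).cons hqt₁ hbqt₁).cons hqt.le hbt⟩

end SignChain

lemma mem_eball_zero_ofReal_iff {R x : ℝ} :
    x ∈ Metric.eball (0 : ℝ) (ENNReal.ofReal R) ↔ x ∈ Ioo (-R) R := by
  rw [Metric.mem_eball, edist_lt_ofReal, Real.dist_eq, sub_zero, Set.mem_Ioo, abs_lt]

lemma hasFPowerSeriesOnBall_ofScalars_of_summable {b : ℕ → ℝ} {R : ℝ} (hR : 0 < R)
    (hconv : ∀ x ∈ Ioo (-R) R, Summable fun n => b n * x ^ n)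
    {f : ℝ → ℝ} (hf : ∀ x ∈ Ioo (-R) R, f x = ∑' n, b n * x ^ n) :
    HasFPowerSeriesOnBall f (FormalMultilinearSeries.ofScalars ℝ b) 0 (ENNReal.ofReal R) where
  r_le := by
    refine ENNReal.le_of_forall_nnreal_lt fun r hr => ?_
    have hrR : (r : ℝ) < R := by simpa [ENNReal.coe_lt_ofReal] using hr
    refine FormalMultilinearSeries.le_radius_of_tendsto _ (l := 0) ?_
    simpa [FormalMultilinearSeries.ofScalars_norm, abs_mul, abs_of_nonneg r.coe_nonneg] using
      (hconv r ⟨by linarith [r.coe_nonneg], hrR⟩).tendsto_atTop_zero.abs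
  r_pos := by simpa using hR
  hasSum {y} hy := by
    rw [mem_eball_zero_ofReal_iff] at hy
    simpa [FormalMultilinearSeries.ofScalars_apply_eq, hf y hy, mul_comm] using (hconv y hy).hasSum

lemma analyticOnNhd_of_summable {b : ℕ → ℝ} {R : ℝ}
    (hconv : ∀ x ∈ Ioo (-R) R, Summable fun n => b n * x ^ n)
    {f : ℝ → ℝ} (hf : ∀ x ∈ Ioo (-R) R, f x = ∑' n, b n * x ^ n) :
    AnalyticOnNhd ℝ f (Ioo (-R) R) := fun x hx =>
  (hasFPowerSeriesOnBall_ofScalars_of_summable (by linarith [hx.1, hx.2]) hconv hf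
    ).analyticAt_of_mem (mem_eball_zero_ofReal_iff.2 hx)

lemma hasSum_mul_deriv_sub_mul {b : ℕ → ℝ} {f : ℝ → ℝ} {r : ENNReal}
    (hf : HasFPowerSeriesOnBall f (FormalMultilinearSeries.ofScalars ℝ b) 0 r)
    (s : ℝ) {x : ℝ} (hx : x ∈ Metric.eball (0 : ℝ) r) :
    HasSum (fun n : ℕ => ((n : ℝ) - s) * b n * x ^ n) (x * deriv f x - s * f x) := by
  have hderiv : HasSum (fun n : ℕ => (n : ℝ) * b n * x ^ n) (x * deriv f x) := by
    have h := (hf.fderiv.hasSum hx).mapL (ContinuousLinearMap.apply ℝ ℝ x)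
    rw [← hasSum_nat_add_iff' 1]
    simp only [ContinuousLinearMap.apply_apply, zero_add,
      FormalMultilinearSeries.derivSeries_apply_diag,
      FormalMultilinearSeries.ofScalars_apply_eq] at h
    convert h using 1
    · ext n
      simp only [Nat.cast_add, Nat.cast_one, smul_eq_mul, nsmul_eq_mul]
      ring
    · simp
  have hsum : HasSum (fun n : ℕ => b n * x ^ n) (f x) := by
    simpa [FormalMultilinearSeries.ofScalars_apply_eq, mul_comm] using hf.hasSum hx
  have hcoeff : (fun n : ℕ => ((n : ℝ) - s) * b n * x ^ n) =
      fun n : ℕ => (n : ℝ) * b n * x ^ n - s * (b n * x ^ n) := funext fun n => by ring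
  exact hcoeff ▸ hderiv.sub (hsum.mul_left s)

lemma exists_mul_neg_of_tsum_eq_zero {b : ℕ → ℝ} (hb : b ≠ 0) {x : ℝ} (hx : 0 < x)
    (hs : Summable fun n => b n * x ^ n) (h0 : ∑' n, b n * x ^ n = 0) :
    ∃ p q, p < q ∧ b p * b q < 0 := by
  by_contra! hsign
  obtain ⟨n₀, hn₀⟩ := Function.ne_iff.1 hb
  have hsame : ∀ n, 0 ≤ b n₀ * b n := fun n => by
    rcases lt_trichotomy n₀ n with h | rfl | h
    · exact hsign n₀ n h
    · exact mul_self_nonneg _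
    · exact mul_comm (b n) (b n₀) ▸ hsign n n₀ h
  have hpos : 0 < ∑' n, b n₀ * (b n * x ^ n) := by
    refine (hs.mul_left (b n₀)).tsum_pos (fun n => ?_) n₀ ?_
    · rw [← mul_assoc]; exact mul_nonneg (hsame n) (pow_nonneg hx.le n)
    · rw [← mul_assoc]; exact mul_pos (mul_self_pos.2 hn₀) (pow_pos hx n₀)
  rw [tsum_mul_left, h0, mul_zero] at hpos
  exact hpos.false

lemma exists_finset_deriv_eq_zero {φ : ℝ → ℝ} {U : Set ℝ} (hU : U.OrdConnected)
    (hφ : ContinuousOn φ U) {Z : Finset ℝ} (hZU : ↑Z ⊆ U) (hZ : ∀ z ∈ Z, φ z = 0) :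
    ∃ W : Finset ℝ, ↑W ⊆ U ∧ (∀ w ∈ W, deriv φ w = 0) ∧ Z.card ≤ (W \ Z).card + 1 := by
  classical
  have hrolle : ∀ x ∈ Z, ∀ y ∈ Z, x < y → ∃ w ∈ Ioo x y, deriv φ w = 0 := fun x hx y hy hxy =>
    exists_deriv_eq_zero hxy (hφ.mono (hU.out (hZU hx) (hZU hy))) ((hZ x hx).trans (hZ y hy).symm)
  choose! w hwIoo hw using hrolle
  refine ⟨((Z ×ˢ Z).filter fun p => p.1 < p.2).image fun p => w p.1 p.2, ?_, ?_, ?_⟩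
  · intro v hv
    simp only [Finset.coe_image, Finset.coe_filter, Finset.mem_product] at hv
    obtain ⟨⟨x, y⟩, ⟨⟨hx, hy⟩, hxy⟩, rfl⟩ := hv
    exact hU.out (hZU hx) (hZU hy) (Ioo_subset_Icc_self (hwIoo x hx y hy hxy))
  · simp only [Finset.mem_image, Finset.mem_filter, Finset.mem_product]
    rintro _ ⟨⟨x, y⟩, ⟨⟨hx, hy⟩, hxy⟩, rfl⟩
    exact hw x hx y hy hxy
  · refine Finset.card_le_sdiff_of_interleaved fun x hx y hy hxy _ =>
      ⟨w x y, Finset.mem_image.2 ⟨(x, y), by simp [hx, hy, hxy], rfl⟩, hwIoo x hx y hy hxy⟩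

lemma hasDerivAt_rpow_neg_mul {f : ℝ → ℝ} {x : ℝ} (hx : 0 < x) (hf : DifferentiableAt ℝ f x)
    (s : ℝ) : HasDerivAt (fun y => y ^ (-s) * f y)
      (x ^ (-s - 1) * (x * deriv f x - s * f x)) x := by
  refine ((Real.hasDerivAt_rpow_const (p := -s) (Or.inl hx.ne')).mul hf.hasDerivAt).congr_deriv ?_
  rw [Real.rpow_sub_one hx.ne']
  field_simp
  ring

/-- Rolle's theorem for `x ^ (-s) * f x`. -/
lemma exists_finset_mul_deriv_sub_mul_eq_zero {f : ℝ → ℝ} {U : Set ℝ} (hU : U.OrdConnected)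
    (hU0 : U ⊆ Ioi 0) (hf : ∀ x ∈ U, DifferentiableAt ℝ f x) {Z : Finset ℝ} (hZU : ↑Z ⊆ U)
    (hZ : ∀ z ∈ Z, f z = 0) (s : ℝ) :
    ∃ W : Finset ℝ, ↑W ⊆ U ∧ (∀ w ∈ W, w * deriv f w - s * f w = 0) ∧
      Z.card ≤ (W \ Z).card + 1 := by
  have hφ : ∀ x ∈ U, HasDerivAt (fun y => y ^ (-s) * f y)
      (x ^ (-s - 1) * (x * deriv f x - s * f x)) x :=
    fun x hx => hasDerivAt_rpow_neg_mul (hU0 hx) (hf x hx) s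
  obtain ⟨W, hWU, hW, hcard⟩ := exists_finset_deriv_eq_zero hU
    (fun x hx => (hφ x hx).continuousAt.continuousWithinAt) hZU fun z hz => by simp [hZ z hz]
  refine ⟨W, hWU, fun w hw => ?_, hcard⟩
  simpa [(hφ w (hWU hw)).deriv, (Real.rpow_pos_of_pos (hU0 (hWU hw)) _).ne'] using hW w hw

lemma apply_eq_zero_of_natCast_le_analyticOrderAt {f : ℝ → ℝ} {z : ℝ} {k : ℕ}
    (h : (k : ℕ∞) ≤ analyticOrderAt f z) (hk : k ≠ 0) : f z = 0 :=
  apply_eq_zero_of_analyticOrderAt_ne_zero fun h0 => hk (by simpa [h0] using h)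

lemma natCast_le_analyticOrderAt_mul_deriv_sub_mul {f : ℝ → ℝ} {z : ℝ} (hf : AnalyticAt ℝ f z)
    {n : ℕ} (h : (n : ℕ∞) + 1 ≤ analyticOrderAt f z) (s : ℝ) :
    (n : ℕ∞) ≤ analyticOrderAt (fun x => x * deriv f x - s * f x) z := by
  have hfz : f z = 0 := apply_eq_zero_of_natCast_le_analyticOrderAt (k := n + 1)
    (by exact_mod_cast h) n.succ_ne_zero
  have hderiv : (n : ℕ∞) ≤ analyticOrderAt (fun x => x * deriv f x) z := by
    change (n : ℕ∞) ≤ analyticOrderAt (id * deriv f) z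
    rw [analyticOrderAt_mul analyticAt_id hf.deriv]
    exact ((analyticOrderAt_deriv_ge_iff hf hfz).2 h).trans le_add_self
  have hmul : (n : ℕ∞) ≤ analyticOrderAt (fun x => s * f x) z := by
    change (n : ℕ∞) ≤ analyticOrderAt ((fun _ => s) * f) z
    rw [analyticOrderAt_mul analyticAt_const hf]
    exact (le_self_add.trans h).trans le_add_self
  exact (le_min hderiv hmul).trans le_analyticOrderAt_sub

def HasAtLeastZerosOn (f : ℝ → ℝ) (U : Set ℝ) (N : ℕ) : Prop :=
  ∃ (Z : Finset ℝ) (m : ℝ → ℕ), ↑Z ⊆ U ∧ (∀ z ∈ Z, (m z : ℕ∞) ≤ analyticOrderAt f z) ∧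
    N ≤ ∑ z ∈ Z, m z

namespace HasAtLeastZerosOn

variable {f : ℝ → ℝ} {U : Set ℝ} {N : ℕ}

lemma exists_eq_zero (h : HasAtLeastZerosOn f U (N + 1)) : ∃ z ∈ U, f z = 0 := by
  obtain ⟨Z, m, hZU, hm, hN⟩ := h
  obtain ⟨z, hz, hmz⟩ := Finset.exists_ne_zero_of_sum_ne_zero (by omega : ∑ z ∈ Z, m z ≠ 0)
  exact ⟨z, hZU hz, apply_eq_zero_of_natCast_le_analyticOrderAt (hm z hz) hmz⟩

lemma mul_deriv_sub_mul (hU : U.OrdConnected) (hU0 : U ⊆ Ioi 0) (hf : AnalyticOnNhd ℝ f U)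
    (h : HasAtLeastZerosOn f U (N + 1)) (s : ℝ) :
    HasAtLeastZerosOn (fun x => x * deriv f x - s * f x) U N := by
  classical
  obtain ⟨Z, m, hZU, hm, hN⟩ := h
  set Z₁ := Z.filter (m · ≠ 0)
  have hZ₁U : ↑Z₁ ⊆ U := (Finset.coe_subset.2 (Finset.filter_subset _ _)).trans hZU
  obtain ⟨W, hWU, hgW, hcard⟩ := exists_finset_mul_deriv_sub_mul_eq_zero hU hU0
    (fun x hx => (hf x hx).differentiableAt) hZ₁U (fun z hz => by
      obtain ⟨hz, hmz⟩ := Finset.mem_filter.1 hz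
      exact apply_eq_zero_of_natCast_le_analyticOrderAt (hm z hz) hmz) s
  have hZ'U : ↑(Z₁ ∪ (W \ Z₁)) ⊆ U := by
    rw [Finset.coe_union]
    exact union_subset hZ₁U ((Finset.coe_subset.2 Finset.sdiff_subset).trans hWU)
  refine ⟨Z₁ ∪ (W \ Z₁), fun z => if z ∈ Z₁ then m z - 1 else 1, hZ'U, fun z hz => ?_, ?_⟩
  · have hfz := hf z (hZ'U hz)
    dsimp only
    split_ifs with hz₁
    · refine natCast_le_analyticOrderAt_mul_deriv_sub_mul hfz ?_ s
      have := Nat.sub_add_cancel (Nat.one_le_iff_ne_zero.2 (Finset.mem_filter.1 hz₁).2)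
      exact_mod_cast this.symm ▸ hm z (Finset.mem_filter.1 hz₁).1
    · have hzW : z ∈ W := by simpa [hz₁] using hz
      rw [Nat.cast_one, Order.one_le_iff_ne_zero, analyticOrderAt_ne_zero]
      exact ⟨(analyticAt_id.mul hfz.deriv).sub (analyticAt_const.mul hfz), hgW z hzW⟩
  · have hsum₁ : ∑ z ∈ Z₁, m z = ∑ z ∈ Z, m z := Finset.sum_filter_ne_zero Z
    have hsub : ∑ z ∈ Z₁, (m z - 1) + Z₁.card = ∑ z ∈ Z₁, m z := by
      rw [Finset.card_eq_sum_ones, ← Finset.sum_add_distrib]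
      exact Finset.sum_congr rfl fun z hz =>
        Nat.sub_add_cancel (Nat.one_le_iff_ne_zero.2 (Finset.mem_filter.1 hz).2)
    rw [Finset.sum_union Finset.disjoint_sdiff, Finset.sum_ite_of_true fun z hz => hz,
      Finset.sum_ite_of_false fun z hz => (Finset.mem_sdiff.1 hz).2, Finset.sum_const,
      smul_eq_mul, mul_one]
    omega

end HasAtLeastZerosOn

theorem exists_signChain_of_hasAtLeastZerosOn {b : ℕ → ℝ} (hb : b ≠ 0) {R : ℝ}
    (hconv : ∀ x ∈ Ioo (-R) R, Summable fun n => b n * x ^ n)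
    {f : ℝ → ℝ} (hf : ∀ x ∈ Ioo (-R) R, f x = ∑' n, b n * x ^ n) {N : ℕ}
    (hN : HasAtLeastZerosOn f (Ioo 0 R) N) : ∃ t, SignChain b N t := by
  induction N generalizing b f with
  | zero => exact ⟨0, trivial⟩
  | succ N ih =>
    obtain ⟨z, hz, hfz⟩ := hN.exists_eq_zero
    have hR : 0 < R := hz.1.trans hz.2
    have hzR : z ∈ Ioo (-R) R := ⟨by linarith [hz.1], hz.2⟩
    obtain ⟨p, q, hpq, hbpq, hfirst⟩ := exists_first_mul_neg
      (exists_mul_neg_of_tsum_eq_zero hb hz.1 (hconv z hzR) (hf z hzR ▸ hfz))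
    set s : ℝ := q - 1 / 2
    have hsum (x) (hx : x ∈ Ioo (-R) R) :
        HasSum (fun n : ℕ => ((n : ℝ) - s) * b n * x ^ n) (x * deriv f x - s * f x) :=
      hasSum_mul_deriv_sub_mul (hasFPowerSeriesOnBall_ofScalars_of_summable hR hconv hf) s
        (mem_eball_zero_ofReal_iff.2 hx)
    have hc : (fun n : ℕ => ((n : ℝ) - s) * b n) ≠ 0 := by
      obtain ⟨n, hn⟩ := Function.ne_iff.1 hb
      refine Function.ne_iff.2 ⟨n, mul_ne_zero (fun h => ?_) hn⟩
      have : (2 * n + 1 : ℝ) = 2 * q := by linarith [show s = q - 1 / 2 from rfl]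
      norm_cast at this
      omega
    have hzeros := hN.mul_deriv_sub_mul ordConnected_Ioo Ioo_subset_Ioi_self
      ((analyticOnNhd_of_summable hconv hf).mono (Ioo_subset_Ioo_left (by linarith))) s
    obtain ⟨t, ht⟩ := ih hc (fun x hx => (hsum x hx).summable)
      (fun x hx => (hsum x hx).tsum_eq.symm) hzeros
    exact SignChain.exists_succ_of_sub_half_mul hpq hbpq hfirst ht

theorem stmt_9_general (b : ℕ → ℝ) (R : ℝ) (hb : b ≠ 0)
    (hconv : ∀ x ∈ Set.Ioo (-R) R, Summable fun n => b n * x ^ n)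
    (f : ℝ → ℝ) (hf : ∀ x ∈ Set.Ioo (-R) R, f x = ∑' n, b n * x ^ n)
    (Z : Finset ℝ) (hZ : ∀ z ∈ Z, z ∈ Set.Ioo 0 R)
    (m : ℝ → ℕ) (hm : ∀ z ∈ Z, ∀ j < m z, iteratedDeriv j f z = 0) :
    ((∑ z ∈ Z, m z : ℕ) : ℕ∞) ≤ signChanges b := by
  have hord : ∀ z ∈ Z, (m z : ℕ∞) ≤ analyticOrderAt f z := fun z hz => by
    have hzR : z ∈ Ioo (-R) R := ⟨by linarith [(hZ z hz).1, (hZ z hz).2], (hZ z hz).2⟩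
    exact (natCast_le_analyticOrderAt_iff_iteratedDeriv_eq_zero
      (analyticOnNhd_of_summable hconv hf z hzR)).2 (hm z hz)
  obtain ⟨t, ht⟩ := exists_signChain_of_hasAtLeastZerosOn hb hconv hf ⟨Z, m, hZ, hord, le_rfl⟩
  exact ht.le_signChanges

theorem stmt_9 (b : ℕ → ℝ) (R : ℝ) (hR : 0 < R) (hb : b ≠ 0)
    (hconv : ∀ x ∈ Set.Ioo (-R) R, Summable fun n => b n * x ^ n)
    (f : ℝ → ℝ) (hf : ∀ x ∈ Set.Ioo (-R) R, f x = ∑' n, b n * x ^ n)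
    (Z : Finset ℝ) (hZ : ∀ z ∈ Z, z ∈ Set.Ioo 0 R)
    (m : ℝ → ℕ) (hm : ∀ z ∈ Z, ∀ j < m z, iteratedDeriv j f z = 0) :
    ((∑ z ∈ Z, m z : ℕ) : ℕ∞) ≤ signChanges b :=
  stmt_9_general b R hb hconv f hf Z hZ m hm
end

section
/- Let $\eta_1,\ldots,\eta_m$ be real numbers, let $\varepsilon_1,\ldots,\varepsilon_m$ be i.i.d. random signs taking values $\pm 1$ with probability $1/2$, and set $S_\varepsilon = \sum_{j=1}^m \varepsilon_j \eta_j$ and $B^2=\sum_{j=1}^m \eta_j^2$. If at least $m/4$ and at most $3m/4$ of the products $\varepsilon_j\eta_j$ are positive, then $\beta^2 := \sum_{j=1}^m (\varepsilon_j\eta_j - \frac1m S_\varepsilon)^2$ satisfies $\frac15 B^2 \le \beta^2 \le B^2$. -/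
open Finset

theorem stmt_18 (m : ℕ) (hm : 1 ≤ m) (η : Fin m → ℝ) (ε : Fin m → ℝ)
    (hε : ∀ j, ε j = 1 ∨ ε j = -1)
    (hgood : (m:ℝ)/4 ≤ ((Finset.univ.filter (fun j => 0 < ε j * η j)).card : ℝ) ∧
             ((Finset.univ.filter (fun j => 0 < ε j * η j)).card : ℝ) ≤ 3*(m:ℝ)/4) :
    (1/5) * (∑ j, η j ^ 2)
      ≤ ∑ j, (ε j * η j - (∑ i, ε i * η i) / (m:ℝ)) ^ 2 ∧
    ∑ j, (ε j * η j - (∑ i, ε i * η i) / (m:ℝ)) ^ 2 ≤ ∑ j, η j ^ 2 := by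
  obtain ⟨hg1, hg2⟩ := hgood
  set x : Fin m → ℝ := fun j => ε j * η j with hx
  have hx2 : ∀ j, x j ^ 2 = η j ^ 2 := by
    intro j; rcases hε j with h | h <;> simp [hx, h] <;> ring
  set S := ∑ i, x i with hS
  have hmpos : (0:ℝ) < m := by exact_mod_cast hm
  have hB : (0:ℝ) ≤ ∑ j, η j ^ 2 := Finset.sum_nonneg fun j _ => sq_nonneg _
  have key : ∑ j, (x j - S / m) ^ 2 = (∑ j, η j ^ 2) - S ^ 2 / m := by
    have h1 : ∑ j, (x j - S / m) ^ 2
        = (∑ j, x j ^ 2) - 2 * (S / m) * S + (m : ℝ) * (S / m) ^ 2 := by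
      rw [Finset.sum_congr rfl (fun j _ => by ring :
        ∀ j ∈ Finset.univ, (x j - S / m) ^ 2 = x j ^ 2 - 2 * (S / m) * x j + (S / m) ^ 2)]
      rw [Finset.sum_add_distrib, Finset.sum_sub_distrib, ← Finset.mul_sum,
        Finset.sum_const, card_univ, Fintype.card_fin, nsmul_eq_mul, ← hS]
    rw [h1, Finset.sum_congr rfl (fun j _ => hx2 j)]
    field_simp
    ring
  -- Cauchy–Schwarz bound on S²
  set A : Finset (Fin m) := Finset.univ.filter (fun j => 0 < x j) with hA
  have hsplit : S = (∑ j ∈ A, x j) + ∑ j ∈ Finset.univ.filter (fun j => ¬ 0 < x j), x j := by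
    rw [hS, hA]; exact (Finset.sum_filter_add_sum_filter_not _ _ _).symm
  have hPn : (0:ℝ) ≤ ∑ j ∈ A, x j :=
    Finset.sum_nonneg fun j hj => le_of_lt (Finset.mem_filter.mp hj).2
  have hNn : ∑ j ∈ Finset.univ.filter (fun j => ¬ 0 < x j), x j ≤ 0 :=
    Finset.sum_nonpos fun j hj => le_of_not_gt (Finset.mem_filter.mp hj).2
  have hsub : ∀ s : Finset (Fin m), ∑ j ∈ s, x j ^ 2 ≤ ∑ j, η j ^ 2 := by
    intro s
    calc ∑ j ∈ s, x j ^ 2 ≤ ∑ j, x j ^ 2 :=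
          Finset.sum_le_sum_of_subset_of_nonneg (Finset.subset_univ s)
            (fun j _ _ => sq_nonneg _)
      _ = ∑ j, η j ^ 2 := Finset.sum_congr rfl (fun j _ => hx2 j)
  have hcardc : ((Finset.univ.filter (fun j => ¬ 0 < x j)).card : ℝ) = (m : ℝ) - A.card := by
    have := Finset.card_filter_add_card_filter_not (s := Finset.univ)
      (p := fun j => 0 < x j)
    have h' : A.card + (Finset.univ.filter (fun j => ¬ 0 < x j)).card = m := by
      simpa [hA] using this
    have := congrArg (fun n : ℕ => (n : ℝ)) h'
    push_cast at this
    linarith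
  have hSsq : S ^ 2 ≤ 3 * m / 4 * ∑ j, η j ^ 2 := by
    rcases le_or_gt 0 S with hSpos | hSneg
    · have hle : S ≤ ∑ j ∈ A, x j := by
        rw [hsplit]; linarith
      have hcs : (∑ j ∈ A, x j) ^ 2 ≤ (A.card : ℝ) * ∑ j ∈ A, x j ^ 2 := by
        exact_mod_cast sq_sum_le_card_mul_sum_sq (s := A) (f := x)
      have h1 : S ^ 2 ≤ (∑ j ∈ A, x j) ^ 2 := by nlinarith
      have h2 : (A.card : ℝ) * ∑ j ∈ A, x j ^ 2 ≤ 3 * m / 4 * ∑ j, η j ^ 2 := by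
        have := hsub A
        have hc : (A.card : ℝ) ≤ 3 * m / 4 := hg2
        have hq : (0:ℝ) ≤ ∑ j ∈ A, x j ^ 2 := Finset.sum_nonneg fun j _ => sq_nonneg _
        nlinarith
      linarith
    · set B := Finset.univ.filter (fun j => ¬ 0 < x j) with hBdef
      have hle : -S ≤ -(∑ j ∈ B, x j) := by
        rw [hsplit]; linarith
      have hcs : (∑ j ∈ B, x j) ^ 2 ≤ (B.card : ℝ) * ∑ j ∈ B, x j ^ 2 := by
        exact_mod_cast sq_sum_le_card_mul_sum_sq (s := B) (f := x)
      have h1 : S ^ 2 ≤ (∑ j ∈ B, x j) ^ 2 := by nlinarith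
      have h2 : (B.card : ℝ) * ∑ j ∈ B, x j ^ 2 ≤ 3 * m / 4 * ∑ j, η j ^ 2 := by
        have := hsub B
        have hc : (B.card : ℝ) ≤ 3 * m / 4 := by rw [hBdef, hcardc]; linarith
        have hq : (0:ℝ) ≤ ∑ j ∈ B, x j ^ 2 := Finset.sum_nonneg fun j _ => sq_nonneg _
        have hcn : (0:ℝ) ≤ (B.card : ℝ) := Nat.cast_nonneg _
        nlinarith
      linarith
  constructor
  · rw [key]
    have : S ^ 2 / m ≤ 3 / 4 * ∑ j, η j ^ 2 := by
      rw [div_le_iff₀ hmpos]; nlinarith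
    linarith
  · rw [key]
    have : (0:ℝ) ≤ S ^ 2 / m := by positivity
    linarith
end
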